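/- arXiv:2408.12847 — 3 statements merged into one kernel-verified Lean document; each statement's English description precedes it below -/
import Mathlib

section
/- (Discrete energy-dissipation by induction.) Let p > 2, C > 0, τ > 0, and m ∈ ℕ. Let E₀, E₁, …, E_m and A₁, …, A_m and B₁, …, B_m be nonnegative real numbers satisfying, for every i = 1, …, m, the inequality (1/τ)(A_i + B_i) + E_i − E_{i−1} ≤ 2 C (1 + E_{i−1}^{2/p}) A_i. If moreover 4 τ C (1 + E₀^{2/p}) ≤ 1, then for every i = 1, …, m one has (1/(2τ)) A_i + (1/τ) B_i + E_i ≤ E_{i−1}; in particular, E_m ≤ E_{m−1} ≤ ⋯ ≤ E₁ ≤ E₀. -/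
theorem stmt13 (p C τ : ℝ) (hp : 2 < p) (hC : 0 < C) (hτ : 0 < τ) (m : ℕ)
    (E A B : ℕ → ℝ)
    (hE : ∀ i ≤ m, 0 ≤ E i)
    (hA : ∀ i, 1 ≤ i → i ≤ m → 0 ≤ A i)
    (hB : ∀ i, 1 ≤ i → i ≤ m → 0 ≤ B i)
    (hrec : ∀ i, 1 ≤ i → i ≤ m →
      (1 / τ) * (A i + B i) + E i - E (i - 1)
        ≤ 2 * C * (1 + E (i - 1) ^ ((2 : ℝ) / p)) * A i)
    (hsmall : 4 * τ * C * (1 + E 0 ^ ((2 : ℝ) / p)) ≤ 1) :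
    (∀ i, 1 ≤ i → i ≤ m →
      (1 / (2 * τ)) * A i + (1 / τ) * B i + E i ≤ E (i - 1)) ∧
    ∀ i j, j ≤ i → i ≤ m → E i ≤ E j := by
  have hexp : (0:ℝ) ≤ 2/p := by positivity
  have step : ∀ i, 1 ≤ i → i ≤ m → E (i-1) ≤ E 0 →
      (1/(2*τ)) * A i + (1/τ) * B i + E i ≤ E (i-1) := by
    intro i h1 hm' hle
    have hEi1 : 0 ≤ E (i-1) := hE _ (le_trans (Nat.sub_le _ _) hm')
    have hr : E (i-1) ^ ((2:ℝ)/p) ≤ E 0 ^ ((2:ℝ)/p) :=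
      Real.rpow_le_rpow hEi1 hle hexp
    have hAi := hA i h1 hm'
    have hBi := hB i h1 hm'
    have h2 : 2*C*(1+E (i-1)^((2:ℝ)/p)) * A i ≤ (1/(2*τ)) * A i := by
      have hc : 2*C*(1+E (i-1)^((2:ℝ)/p)) ≤ 1/(2*τ) := by
        rw [le_div_iff₀ (by positivity)]
        nlinarith [mul_le_mul_of_nonneg_left hr (by positivity : (0:ℝ) ≤ 4*τ*C)]
      exact mul_le_mul_of_nonneg_right hc hAi
    have h3 := (hrec i h1 hm').trans h2
    have hτ' : (0:ℝ) < 1/τ := by positivity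
    have heq : 1/τ - 1/(2*τ) = 1/(2*τ) := by field_simp; ring
    nlinarith
  have mono : ∀ i, i ≤ m → ∀ j, j ≤ i → E i ≤ E j := by
    intro i
    induction i with
    | zero => intro _ j hj; interval_cases j; exact le_refl _
    | succ n ih =>
      intro hm' j hj
      have hn : n ≤ m := le_trans (Nat.le_succ n) hm'
      have h0 : E n ≤ E 0 := ih hn 0 (Nat.zero_le n)
      have hs := step (n+1) (Nat.le_add_left 1 n) hm' (by simpa using h0)
      simp only [Nat.add_sub_cancel] at hs
      have hstep : E (n+1) ≤ E n := by
        have hAi := hA (n+1) (Nat.le_add_left 1 n) hm'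
        have hBi := hB (n+1) (Nat.le_add_left 1 n) hm'
        have h1 : (0:ℝ) < 1/(2*τ) := by positivity
        have h2 : (0:ℝ) < 1/τ := by positivity
        nlinarith
      rcases Nat.eq_or_lt_of_le hj with h | h
      · subst h; exact le_refl _
      · exact hstep.trans (ih hn j (Nat.lt_succ_iff.mp h))
  refine ⟨fun i h1 hm' => ?_, fun i j hj hm' => mono i hm' j hj⟩
  exact step i h1 hm' (mono (i-1) (le_trans (Nat.sub_le _ _) hm') 0 (Nat.zero_le _))
end

section
/- (Subdifferential of the anisotropy functional, smooth case.) Let Ω ⊂ ℝ² be a measurable set of finite Lebesgue measure, and let γ̃ : ℝ² → [0, ∞) be convex and continuously differentiable with |∇γ̃(x)| ≤ L for all x ∈ ℝ². Define Φ(w) := ∫_Ω γ̃(w(x)) dx for w ∈ L²(Ω; ℝ²) (finite, by the linear growth of γ̃). Then for w, v ∈ L²(Ω; ℝ²), the subgradient inequality ∫_Ω v(x) · (u(x) − w(x)) dx ≤ Φ(u) − Φ(w) for all u ∈ L²(Ω; ℝ²) holds if and only if v(x) = ∇γ̃(w(x)) for a.e. x ∈ Ω. -/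
open Real MeasureTheory RealInnerProductSpace

noncomputable abbrev E2 : Type := EuclideanSpace ℝ (Fin 2)

/-! The pointwise subgradient inequality `⟪∇γ a, b - a⟫ ≤ γ b - γ a` of a differentiable convex
function integrates to the "if" direction. Conversely, testing the hypothesis with `u = w + t • z`
and bounding `γ (w + t • z) - γ w` by the subgradient inequality at `w + t • z` gives
`∫ ⟪v, z⟫ ≤ ∫ ⟪∇γ (w + t • z), z⟫` for every `t > 0`. As `t → 0⁺` the right side tends to
`∫ ⟪∇γ ∘ w, z⟫` by dominated convergence (`‖∇γ‖ ≤ L`), and the choice `z = v - ∇γ ∘ w` gives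
`∫ ‖v - ∇γ ∘ w‖² ≤ 0`. -/

open Filter Set Topology

section Gradient

variable {E : Type*} [NormedAddCommGroup E] [InnerProductSpace ℝ E] [CompleteSpace E]
  {f : E → ℝ}

theorem ConvexOn.inner_gradient_sub_le (hf : ConvexOn ℝ univ f) {a : E}
    (ha : DifferentiableAt ℝ f a) (b : E) : ⟪gradient f a, b - a⟫ ≤ f b - f a := by
  let ℓ : ℝ →ᵃ[ℝ] E := AffineMap.lineMap a b
  have hline : ConvexOn ℝ univ (f ∘ ℓ) := by simpa using hf.comp_affineMap ℓ
  have hderiv : HasDerivAt (f ∘ ℓ) (fderiv ℝ f a (b - a)) 0 := by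
    have ha' : HasFDerivAt f (fderiv ℝ f a) (ℓ 0) := by simpa [ℓ] using ha.hasFDerivAt
    exact ha'.comp_hasDerivAt 0 AffineMap.hasDerivAt_lineMap
  simpa [ℓ, slope_def_field] using
    hline.le_slope_of_hasDerivAt (mem_univ 0) (mem_univ 1) one_pos hderiv

theorem norm_sub_le_of_norm_gradient_le (hf : Differentiable ℝ f) {L : ℝ}
    (hL : ∀ x, ‖gradient f x‖ ≤ L) (a b : E) : ‖f b - f a‖ ≤ L * ‖b - a‖ :=
  convex_univ.norm_image_sub_le_of_norm_fderiv_le (fun x _ => hf x)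
    (fun x _ => by simpa [← toDual_gradient] using hL x) (mem_univ a) (mem_univ b)

end Gradient

section Integral

variable {α E : Type*} [MeasurableSpace α] {μ : Measure α}
  [NormedAddCommGroup E] [InnerProductSpace ℝ E]

theorem MeasureTheory.MemLp.integrable_inner {g h : α → E} (hg : MemLp g 2 μ)
    (hh : MemLp h 2 μ) : Integrable (fun x => ⟪g x, h x⟫) μ := by
  refine (L2.integrable_inner (𝕜 := ℝ) (hg.toLp g) (hh.toLp h)).congr ?_
  filter_upwards [hg.coeFn_toLp, hh.coeFn_toLp] with x hgx hhx
  rw [hgx, hhx]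

theorem MeasureTheory.MemLp.ae_eq_zero_of_integral_inner_self_nonpos {g : α → E}
    (hg : MemLp g 2 μ) (h : ∫ x, ⟪g x, g x⟫ ∂μ ≤ 0) : g =ᵐ[μ] 0 := by
  have hnonneg : 0 ≤ᵐ[μ] fun x => ⟪g x, g x⟫ := ae_of_all _ fun _ => real_inner_self_nonneg
  have hzero := (integral_eq_zero_iff_of_nonneg_ae hnonneg (hg.integrable_inner hg)).mp
    (le_antisymm h (integral_nonneg_of_ae hnonneg))
  filter_upwards [hzero] with x hx
  exact inner_self_eq_zero.mp hx

variable [CompleteSpace E] [IsFiniteMeasure μ] {f : E → ℝ} {L : ℝ}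

theorem MeasureTheory.Integrable.comp_of_norm_gradient_le (hf : Differentiable ℝ f)
    (hL : ∀ x, ‖gradient f x‖ ≤ L) {u : α → E} (hu : Integrable u μ) :
    Integrable (fun x => f (u x)) μ := by
  refine Integrable.mono' ((integrable_const ‖f 0‖).add (hu.norm.const_mul L))
    (hf.continuous.comp_aestronglyMeasurable hu.aestronglyMeasurable) (ae_of_all _ fun x => ?_)
  have := norm_sub_le_of_norm_gradient_le hf hL 0 (u x)
  rw [sub_zero] at this
  show ‖f (u x)‖ ≤ ‖f 0‖ + L * ‖u x‖
  linarith [norm_le_norm_add_norm_sub' (f (u x)) (f 0)]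

theorem memLp_gradient_comp (hgrad : Continuous (gradient f)) (hL : ∀ x, ‖gradient f x‖ ≤ L)
    {u : α → E} (hu : AEStronglyMeasurable u μ) : MemLp (fun x => gradient f (u x)) 2 μ :=
  MemLp.of_bound (hgrad.comp_aestronglyMeasurable hu) L (ae_of_all _ fun x => hL (u x))

end Integral

section Subgradient

variable {α E : Type*} [MeasurableSpace α] {μ : Measure α}
  [NormedAddCommGroup E] [InnerProductSpace ℝ E] [CompleteSpace E] {f : E → ℝ} {L : ℝ}

theorem tendsto_integral_inner_gradient_add_smul (hgrad : Continuous (gradient f))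
    (hL : ∀ x, ‖gradient f x‖ ≤ L) {w z : α → E} (hw : AEStronglyMeasurable w μ)
    (hz : Integrable z μ) :
    Tendsto (fun t : ℝ => ∫ x, ⟪gradient f (w x + t • z x), z x⟫ ∂μ) (𝓝 0)
      (𝓝 (∫ x, ⟪gradient f (w x), z x⟫ ∂μ)) := by
  refine tendsto_integral_filter_of_dominated_convergence (fun x => L * ‖z x‖)
    (Eventually.of_forall fun t => (hgrad.comp_aestronglyMeasurable
      (hw.add (hz.aestronglyMeasurable.const_smul t))).inner hz.aestronglyMeasurable)
    (Eventually.of_forall fun t => ae_of_all _ fun x => ?_) (hz.norm.const_mul L)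
    (ae_of_all _ fun x => ?_)
  · exact (norm_inner_le_norm _ _).trans
      (mul_le_mul_of_nonneg_right (hL _) (norm_nonneg _))
  · have hline : Tendsto (fun t : ℝ => w x + t • z x) (𝓝 0) (𝓝 (w x)) := by
      simpa using ((tendsto_id (x := 𝓝 (0 : ℝ))).smul_const (z x)).const_add (w x)
    exact ((hgrad.tendsto (w x)).comp hline).inner tendsto_const_nhds

variable [IsFiniteMeasure μ]

theorem integral_inner_sub_le_of_ae_eq_gradient (hconv : ConvexOn ℝ univ f)
    (hf : Differentiable ℝ f) (hL : ∀ x, ‖gradient f x‖ ≤ L) {u w v : α → E}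
    (hu : MemLp u 2 μ) (hw : MemLp w 2 μ) (hv : MemLp v 2 μ)
    (hvw : ∀ᵐ x ∂μ, v x = gradient f (w x)) :
    ∫ x, ⟪v x, u x - w x⟫ ∂μ ≤ (∫ x, f (u x) ∂μ) - ∫ x, f (w x) ∂μ := by
  have hfu := (hu.integrable one_le_two).comp_of_norm_gradient_le hf hL
  have hfw := (hw.integrable one_le_two).comp_of_norm_gradient_le hf hL
  rw [← integral_sub hfu hfw]
  refine integral_mono_ae (hv.integrable_inner (hu.sub hw)) (hfu.sub hfw) ?_
  filter_upwards [hvw] with x hx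
  rw [hx]
  exact hconv.inner_gradient_sub_le (hf _) _

theorem integral_inner_le_integral_inner_gradient_add_smul (hconv : ConvexOn ℝ univ f)
    (hf : Differentiable ℝ f) (hgrad : Continuous (gradient f))
    (hL : ∀ x, ‖gradient f x‖ ≤ L) {w v z : α → E}
    (hw : MemLp w 2 μ) (hz : MemLp z 2 μ)
    (H : ∀ u : α → E, MemLp u 2 μ →
      ∫ x, ⟪v x, u x - w x⟫ ∂μ ≤ (∫ x, f (u x) ∂μ) - ∫ x, f (w x) ∂μ)
    {t : ℝ} (ht : 0 < t) :
    ∫ x, ⟪v x, z x⟫ ∂μ ≤ ∫ x, ⟪gradient f (w x + t • z x), z x⟫ ∂μ := by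
  have hu : MemLp (fun x => w x + t • z x) 2 μ := hw.add (hz.const_smul t)
  have hfu := (hu.integrable one_le_two).comp_of_norm_gradient_le hf hL
  have hfw := (hw.integrable one_le_two).comp_of_norm_gradient_le hf hL
  have hdiff : ∀ x, f (w x + t • z x) - f (w x) ≤ t * ⟪gradient f (w x + t • z x), z x⟫ := by
    intro x
    have := hconv.inner_gradient_sub_le (hf (w x + t • z x)) (w x)
    rw [sub_add_cancel_left, inner_neg_right, real_inner_smul_right] at this
    linarith
  refine le_of_mul_le_mul_left ?_ ht
  calc t * ∫ x, ⟪v x, z x⟫ ∂μ = ∫ x, ⟪v x, (w x + t • z x) - w x⟫ ∂μ := by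
        simp only [add_sub_cancel_left, real_inner_smul_right, integral_const_mul]
    _ ≤ ∫ x, (f (w x + t • z x) - f (w x)) ∂μ := (H _ hu).trans_eq (integral_sub hfu hfw).symm
    _ ≤ ∫ x, t * ⟪gradient f (w x + t • z x), z x⟫ ∂μ :=
        integral_mono (hfu.sub hfw)
          (((memLp_gradient_comp hgrad hL hu.1).integrable_inner hz).const_mul t) hdiff
    _ = t * ∫ x, ⟪gradient f (w x + t • z x), z x⟫ ∂μ := integral_const_mul t _

theorem ae_eq_gradient_of_forall_integral_inner_sub_le (hconv : ConvexOn ℝ univ f)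
    (hf : Differentiable ℝ f) (hgrad : Continuous (gradient f))
    (hL : ∀ x, ‖gradient f x‖ ≤ L) {w v : α → E} (hw : MemLp w 2 μ) (hv : MemLp v 2 μ)
    (H : ∀ u : α → E, MemLp u 2 μ →
      ∫ x, ⟪v x, u x - w x⟫ ∂μ ≤ (∫ x, f (u x) ∂μ) - ∫ x, f (w x) ∂μ) :
    ∀ᵐ x ∂μ, v x = gradient f (w x) := by
  set g : α → E := fun x => gradient f (w x)
  have hg : MemLp g 2 μ := memLp_gradient_comp hgrad hL hw.1
  have hz : MemLp (v - g) 2 μ := hv.sub hg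
  have hle : ∫ x, ⟪v x, (v - g) x⟫ ∂μ ≤ ∫ x, ⟪g x, (v - g) x⟫ ∂μ :=
    ge_of_tendsto
      ((tendsto_integral_inner_gradient_add_smul hgrad hL hw.1
        (hz.integrable one_le_two)).mono_left (nhdsWithin_le_nhds (s := Ioi 0)))
      (eventually_nhdsWithin_of_forall fun t ht =>
        integral_inner_le_integral_inner_gradient_add_smul hconv hf hgrad hL hw hz H ht)
  have hself : ∫ x, ⟪(v - g) x, (v - g) x⟫ ∂μ ≤ 0 := by
    calc ∫ x, ⟪(v - g) x, (v - g) x⟫ ∂μ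
        = (∫ x, ⟪v x, (v - g) x⟫ ∂μ) - ∫ x, ⟪g x, (v - g) x⟫ ∂μ := by
          rw [← integral_sub (hv.integrable_inner hz) (hg.integrable_inner hz)]
          simp only [Pi.sub_apply, inner_sub_left]
      _ ≤ 0 := sub_nonpos.mpr hle
  filter_upwards [hz.ae_eq_zero_of_integral_inner_self_nonpos hself] with x hx
  exact sub_eq_zero.mp hx

end Subgradient

theorem stmt15_general (Ω : Set E2) (hΩfin : volume Ω ≠ ⊤)
    (γ : E2 → ℝ) (L : ℝ)
    (hγ_conv : ConvexOn ℝ Set.univ γ)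
    (hγ_smooth : ContDiff ℝ 1 γ) (hL : ∀ x : E2, ‖gradient γ x‖ ≤ L)
    (w v : E2 → E2)
    (hw : MemLp w 2 (volume.restrict Ω)) (hv : MemLp v 2 (volume.restrict Ω)) :
    (∀ u : E2 → E2, MemLp u 2 (volume.restrict Ω) →
        ∫ x in Ω, ⟪v x, u x - w x⟫ ≤ (∫ x in Ω, γ (u x)) - ∫ x in Ω, γ (w x))
      ↔ ∀ᵐ x ∂volume.restrict Ω, v x = gradient γ (w x) := by
  have : IsFiniteMeasure (volume.restrict Ω) := isFiniteMeasure_restrict.mpr hΩfin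
  have hdiff : Differentiable ℝ γ := hγ_smooth.differentiable one_ne_zero
  have hgrad : Continuous (gradient γ) :=
    (InnerProductSpace.toDual ℝ E2).symm.continuous.comp
      (hγ_smooth.continuous_fderiv one_ne_zero)
  exact ⟨ae_eq_gradient_of_forall_integral_inner_sub_le hγ_conv hdiff hgrad hL hw hv,
    fun hvw u hu => integral_inner_sub_le_of_ae_eq_gradient hγ_conv hdiff hL hu hw hv hvw⟩

theorem stmt15 (Ω : Set E2) (hΩ : MeasurableSet Ω) (hΩfin : volume Ω ≠ ⊤)
    (γ : E2 → ℝ) (L : ℝ)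
    (hγ_nonneg : ∀ x, 0 ≤ γ x) (hγ_conv : ConvexOn ℝ Set.univ γ)
    (hγ_smooth : ContDiff ℝ 1 γ) (hL : ∀ x : E2, ‖gradient γ x‖ ≤ L)
    (w v : E2 → E2)
    (hw : MemLp w 2 (volume.restrict Ω)) (hv : MemLp v 2 (volume.restrict Ω)) :
    (∀ u : E2 → E2, MemLp u 2 (volume.restrict Ω) →
        ∫ x in Ω, ⟪v x, u x - w x⟫ ≤ (∫ x in Ω, γ (u x)) - ∫ x in Ω, γ (w x))
      ↔ ∀ᵐ x ∂volume.restrict Ω, v x = gradient γ (w x) :=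
  stmt15_general Ω hΩfin γ L hγ_conv hγ_smooth hL w v hw hv
end

section
/- (Mosco convergence of the mollified anisotropy functionals on L².) Let Ω ⊂ ℝ² be a measurable set of finite Lebesgue measure, let γ : ℝ² → [0, ∞) be convex and Lipschitz continuous, for ε > 0 set γ_ε := ρ_ε ∗ γ and γ₀ := γ, and define Φ_ε(w) := ∫_Ω γ_ε(w(x)) dx for w ∈ L²(Ω; ℝ²). Let ε₀ ≥ 0 and let {ε_n} ⊂ (0, ∞) with ε_n → ε₀. Then: (M1) for every w ∈ L²(Ω; ℝ²), Φ_{ε_n}(w) → Φ_{ε₀}(w) as n → ∞; and (M2) whenever w_n → w weakly in L²(Ω; ℝ²) (i.e. ∫_Ω w_n · φ dx → ∫_Ω w · φ dx for every φ ∈ L²(Ω; ℝ²)), one has liminf_{n→∞} Φ_{ε_n}(w_n) ≥ Φ_{ε₀}(w). -/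
open Real MeasureTheory RealInnerProductSpace Filter Topology NNReal

/-- The mollification `γ_ε = ρ_ε ∗ γ`, where `ρ_ε (y) = ε⁻² ρ (y / ε)`. -/
noncomputable def mollify (ρ γ : E2 → ℝ) (ε : ℝ) (x : E2) : ℝ :=
  ∫ y : E2, (ε ^ 2)⁻¹ * ρ (ε⁻¹ • y) * γ (x - y)

/-- The family `γ_ε` for `ε ≥ 0`, with `γ_0 := γ`. -/
noncomputable def gam (ρ γ : E2 → ℝ) (ε : ℝ) : E2 → ℝ :=
  if ε = 0 then γ else mollify ρ γ ε

/-- Scaled version of the mollification, valid also at `ε = 0`. -/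
noncomputable def molA (ρ γ : E2 → ℝ) (ε : ℝ) (x : E2) : ℝ :=
  ∫ z : E2, ρ z * γ (x - ε • z)

lemma molA_int (ρ γ : E2 → ℝ) (hρc : Continuous ρ)
    (hρ_supp : Function.support ρ ⊆ Metric.closedBall 0 1) (hγc : Continuous γ)
    (c : E2) (ε : ℝ) : Integrable (fun z : E2 => ρ z * γ (c - ε • z)) := by
  apply Continuous.integrable_of_hasCompactSupport
  · exact hρc.mul (hγc.comp (continuous_const.sub (continuous_id.const_smul ε)))
  · apply HasCompactSupport.intro (isCompact_closedBall (0:E2) 1)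
    intro z hz
    have : ρ z = 0 := by
      by_contra h; exact hz (hρ_supp h)
    simp [this]

lemma molA_nonneg (ρ γ : E2 → ℝ) (hρ_nonneg : ∀ x, 0 ≤ ρ x) (hγ_nonneg : ∀ x, 0 ≤ γ x)
    (ε : ℝ) (x : E2) : 0 ≤ molA ρ γ ε x :=
  integral_nonneg fun z => mul_nonneg (hρ_nonneg z) (hγ_nonneg _)

lemma molA_est (ρ γ : E2 → ℝ) (L : ℝ≥0) (hρ_nonneg : ∀ x, 0 ≤ ρ x)
    (hρ_supp : Function.support ρ ⊆ Metric.closedBall 0 1)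
    (hρ_int : ∫ x : E2, ρ x = 1) (hρc : Continuous ρ) (hγ_lip : LipschitzWith L γ)
    (ε δ : ℝ) (x y : E2) :
    |molA ρ γ ε x - molA ρ γ δ y| ≤ L * (‖x - y‖ + |ε - δ|) := by
  have hγc := hγ_lip.continuous
  have h1 := molA_int ρ γ hρc hρ_supp hγc x ε
  have h2 := molA_int ρ γ hρc hρ_supp hγc y δ
  have hρint : Integrable ρ (volume : Measure E2) := by
    apply hρc.integrable_of_hasCompactSupport
    apply HasCompactSupport.intro (isCompact_closedBall (0:E2) 1)
    intro z hz
    by_contra h; exact hz (hρ_supp h)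
  set C : ℝ := (L : ℝ) * (‖x - y‖ + |ε - δ|) with hC
  have hC0 : 0 ≤ C := by
    apply mul_nonneg L.coe_nonneg
    positivity
  have key : ∀ z : E2, |ρ z * γ (x - ε • z) - ρ z * γ (y - δ • z)| ≤ ρ z * C := by
    intro z
    rw [← mul_sub, abs_mul, abs_of_nonneg (hρ_nonneg z)]
    rcases eq_or_ne (ρ z) 0 with h | h
    · simp [h]
    · have hz1 : ‖z‖ ≤ 1 := by
        have := hρ_supp h
        simpa [Metric.mem_closedBall, dist_eq_norm] using this
      apply mul_le_mul_of_nonneg_left _ (hρ_nonneg z)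
      have hlip : |γ (x - ε • z) - γ (y - δ • z)| ≤ (L : ℝ) * ‖(x - ε • z) - (y - δ • z)‖ := by
        have := hγ_lip.dist_le_mul (x - ε • z) (y - δ • z)
        simpa [Real.dist_eq, dist_eq_norm] using this
      refine hlip.trans ?_
      rw [hC]
      apply mul_le_mul_of_nonneg_left _ L.coe_nonneg
      have : (x - ε • z) - (y - δ • z) = (x - y) - (ε - δ) • z := by
        rw [sub_smul]; abel
      rw [this]
      refine (norm_sub_le _ _).trans ?_
      gcongr
      rw [norm_smul]
      calc ‖ε - δ‖ * ‖z‖ ≤ ‖ε - δ‖ * 1 := by gcongr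
        _ = |ε - δ| := by rw [mul_one, Real.norm_eq_abs]
  calc |molA ρ γ ε x - molA ρ γ δ y| = |∫ z : E2, (ρ z * γ (x - ε • z) - ρ z * γ (y - δ • z))| := by
        rw [molA, molA, integral_sub h1 h2]
    _ ≤ ∫ z : E2, |ρ z * γ (x - ε • z) - ρ z * γ (y - δ • z)| := by
        simpa [Real.norm_eq_abs] using norm_integral_le_integral_norm
          (fun z : E2 => ρ z * γ (x - ε • z) - ρ z * γ (y - δ • z))
    _ ≤ ∫ z : E2, ρ z * C := integral_mono (h1.sub h2).abs (hρint.mul_const _) key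
    _ = C := by rw [integral_mul_const, hρ_int, one_mul]

lemma gam_eq_molA (ρ γ : E2 → ℝ) (hρc : Continuous ρ)
    (hρ_supp : Function.support ρ ⊆ Metric.closedBall 0 1)
    (hρ_int : ∫ x : E2, ρ x = 1) (hγc : Continuous γ)
    (ε : ℝ) (hε : 0 ≤ ε) (x : E2) : gam ρ γ ε x = molA ρ γ ε x := by
  rcases eq_or_lt_of_le hε with h | h
  · subst h
    rw [show gam ρ γ 0 = γ from if_pos rfl]
    simp only [molA, zero_smul, sub_zero]
    rw [integral_mul_const, hρ_int, one_mul]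
  · -- ε > 0 : change of variables
    have hne : ε ≠ 0 := ne_of_gt h
    simp only [gam, if_neg hne, mollify, molA]
    have hfr : Module.finrank ℝ E2 = 2 := by simp [finrank_euclideanSpace]
    have hε2 : ((ε : ℝ) ^ 2)⁻¹ ≠ 0 := inv_ne_zero (pow_ne_zero 2 hne)
    have hsm : ∀ z : E2, ε⁻¹ • ε • z = z := fun z => by
      rw [smul_smul, inv_mul_cancel₀ hne, one_smul]
    have key := MeasureTheory.Measure.integral_comp_smul (volume : Measure E2)
      (fun y : E2 => (ε ^ 2)⁻¹ * ρ (ε⁻¹ • y) * γ (x - y)) ε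
    rw [hfr] at key
    simp only [hsm, mul_assoc] at key
    rw [integral_const_mul, smul_eq_mul,
      abs_of_pos (inv_pos.mpr (by positivity : (0:ℝ) < ε ^ 2))] at key
    simp only [molA, mollify, mul_assoc]
    exact (mul_left_cancel₀ hε2 key).symm

lemma molA_convex (ρ γ : E2 → ℝ) (hρc : Continuous ρ) (hρ_nonneg : ∀ x, 0 ≤ ρ x)
    (hρ_supp : Function.support ρ ⊆ Metric.closedBall 0 1)
    (hγ_conv : ConvexOn ℝ Set.univ γ) (hγc : Continuous γ) (ε : ℝ) :
    ConvexOn ℝ Set.univ (molA ρ γ ε) := by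
  refine ⟨convex_univ, ?_⟩
  intro a _ b _ θ σ hθ hσ hθσ
  have h1 := molA_int ρ γ hρc hρ_supp hγc a ε
  have h2 := molA_int ρ γ hρc hρ_supp hγc b ε
  have h3 := molA_int ρ γ hρc hρ_supp hγc (θ • a + σ • b) ε
  have key : ∀ z : E2, ρ z * γ ((θ • a + σ • b) - ε • z)
      ≤ θ * (ρ z * γ (a - ε • z)) + σ * (ρ z * γ (b - ε • z)) := by
    intro z
    have hcv := hγ_conv.2 (Set.mem_univ (a - ε • z)) (Set.mem_univ (b - ε • z)) hθ hσ hθσ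
    have heq : θ • (a - ε • z) + σ • (b - ε • z) = (θ • a + σ • b) - ε • z := by
      have h : (ε • z : E2) = θ • (ε • z) + σ • (ε • z) := by
        rw [← add_smul, hθσ, one_smul]
      rw [smul_sub, smul_sub]
      conv_rhs => rw [h]
      abel
    rw [heq] at hcv
    calc ρ z * γ ((θ • a + σ • b) - ε • z)
        ≤ ρ z * (θ • γ (a - ε • z) + σ • γ (b - ε • z)) :=
          mul_le_mul_of_nonneg_left hcv (hρ_nonneg z)
      _ = θ * (ρ z * γ (a - ε • z)) + σ * (ρ z * γ (b - ε • z)) := by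
          simp only [smul_eq_mul]; ring
  simp only [molA, smul_eq_mul]
  calc (∫ z : E2, ρ z * γ ((θ • a + σ • b) - ε • z))
      ≤ ∫ z : E2, (θ * (ρ z * γ (a - ε • z)) + σ * (ρ z * γ (b - ε • z))) :=
        integral_mono h3 ((h1.const_mul θ).add (h2.const_mul σ)) key
    _ = θ * (∫ z : E2, ρ z * γ (a - ε • z)) + σ * ∫ z : E2, ρ z * γ (b - ε • z) := by
        rw [integral_add (h1.const_mul θ) (h2.const_mul σ), integral_const_mul, integral_const_mul]

lemma exists_subgradient (f : E2 → ℝ) (hconv : ConvexOn ℝ Set.univ f)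
    (hcont : Continuous f) (a : E2) :
    ∃ p : E2, ∀ b, f a + ⟪p, b - a⟫ ≤ f b := by
  set s : Set (E2 × ℝ) := {q | f q.1 < q.2} with hs
  have hs_open : IsOpen s := isOpen_lt (hcont.comp continuous_fst) continuous_snd
  have hs_conv : Convex ℝ s := by
    intro q hq r hr θ σ hθ hσ hθσ
    simp only [hs, Set.mem_setOf_eq] at hq hr ⊢
    have hcv := hconv.2 (Set.mem_univ q.1) (Set.mem_univ r.1) hθ hσ hθσ
    have h2 : (θ • q + σ • r).1 = θ • q.1 + σ • r.1 := rfl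
    have h3 : (θ • q + σ • r).2 = θ • q.2 + σ • r.2 := rfl
    rw [h2, h3]
    refine hcv.trans_lt ?_
    rcases eq_or_lt_of_le hθ with h | h
    · subst h
      have : σ = 1 := by linarith
      subst this
      simpa using hr
    · exact add_lt_add_of_lt_of_le (smul_lt_smul_of_pos_left hq h)
        (smul_le_smul_of_nonneg_left hr.le hσ)
  have hnot : ((a, f a) : E2 × ℝ) ∉ s := by simp [hs]
  obtain ⟨ℓ, hℓ⟩ := geometric_hahn_banach_open_point hs_conv hs_open hnot
  set c : ℝ := ℓ (0, 1) with hc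
  have hdecomp : ∀ (x : E2) (t : ℝ), ℓ (x, t) = ℓ (x, 0) + t * c := by
    intro x t
    have hxt : ((x, t) : E2 × ℝ) = (x, (0:ℝ)) + t • ((0:E2), (1:ℝ)) := by
      simp [Prod.ext_iff]
    rw [hxt, map_add, ℓ.map_smul, smul_eq_mul, hc]
  have hcneg : c < 0 := by
    have h1 := hℓ (a, f a + 1) (by simp [hs])
    rw [hdecomp a (f a + 1), hdecomp a (f a)] at h1
    linarith
  have key : ∀ b : E2, ℓ (b, 0) + f b * c ≤ ℓ (a, 0) + f a * c := by
    intro b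
    have hev : ∀ᶠ δ in 𝓝[>] (0:ℝ), ℓ (b, 0) + (f b + δ) * c ≤ ℓ (a, 0) + f a * c := by
      filter_upwards [self_mem_nhdsWithin] with δ hδ
      have hδ' : (0:ℝ) < δ := hδ
      have hmem : ((b, f b + δ) : E2 × ℝ) ∈ s := by
        simp only [hs, Set.mem_setOf_eq]; linarith
      have := hℓ _ hmem
      rw [hdecomp b (f b + δ), hdecomp a (f a)] at this
      exact this.le
    have hlim : Tendsto (fun δ : ℝ => ℓ (b, 0) + (f b + δ) * c) (𝓝[>] 0)
        (𝓝 (ℓ (b, 0) + (f b + 0) * c)) := by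
      apply Tendsto.mono_left _ nhdsWithin_le_nhds
      exact Continuous.tendsto
        (continuous_const.add ((continuous_const.add continuous_id).mul continuous_const)) 0
    simpa using le_of_tendsto hlim hev
  set g : E2 →L[ℝ] ℝ := ℓ.comp (ContinuousLinearMap.inl ℝ E2 ℝ) with hg
  set v : E2 := (InnerProductSpace.toDual ℝ E2).symm g with hv
  have hvx : ∀ x : E2, ⟪v, x⟫ = ℓ (x, 0) := fun x => by
    rw [hv, InnerProductSpace.toDual_symm_apply]; rfl
  have hposc : 0 < -c := by linarith
  refine ⟨(-c)⁻¹ • v, fun b => ?_⟩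
  have hip : ⟪(-c)⁻¹ • v, b - a⟫ = (-c)⁻¹ * (ℓ (b, 0) - ℓ (a, 0)) := by
    rw [real_inner_smul_left, inner_sub_right, hvx, hvx]
  rw [hip]
  have h1 := key b
  have h2 : ℓ (b, 0) - ℓ (a, 0) ≤ (f b - f a) * (-c) := by nlinarith
  have h3 : (-c)⁻¹ * (ℓ (b, 0) - ℓ (a, 0)) ≤ f b - f a := by
    calc (-c)⁻¹ * (ℓ (b, 0) - ℓ (a, 0)) ≤ (-c)⁻¹ * ((f b - f a) * (-c)) :=
          mul_le_mul_of_nonneg_left h2 (inv_nonneg.mpr hposc.le)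
      _ = f b - f a := by
          rw [mul_comm (f b - f a), ← mul_assoc, inv_mul_cancel₀ hposc.ne', one_mul]
  linarith

lemma subgrad_norm_le (f : E2 → ℝ) (L : ℝ≥0) (hf : LipschitzWith L f) (a p : E2)
    (hp : ∀ b, f a + ⟪p, b - a⟫ ≤ f b) : ‖p‖ ≤ L := by
  have h := hp (a + p)
  rw [add_sub_cancel_left, real_inner_self_eq_norm_sq] at h
  have h3 : f (a + p) - f a ≤ (L : ℝ) * ‖p‖ := by
    have hd := hf.dist_le_mul (a + p) a
    rw [Real.dist_eq, dist_eq_norm, add_sub_cancel_left] at hd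
    calc f (a + p) - f a ≤ |f (a + p) - f a| := le_abs_self _
      _ ≤ (L : ℝ) * ‖p‖ := hd
  by_cases hp0 : ‖p‖ = 0
  · rw [hp0]; exact L.coe_nonneg
  · have hpos : 0 < ‖p‖ := lt_of_le_of_ne (norm_nonneg p) (Ne.symm hp0)
    nlinarith

lemma molA_lip (ρ γ : E2 → ℝ) (L : ℝ≥0) (hρ_nonneg : ∀ x, 0 ≤ ρ x)
    (hρ_supp : Function.support ρ ⊆ Metric.closedBall 0 1)
    (hρ_int : ∫ x : E2, ρ x = 1) (hρc : Continuous ρ) (hγ_lip : LipschitzWith L γ)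
    (ε : ℝ) : LipschitzWith L (molA ρ γ ε) := by
  apply LipschitzWith.of_dist_le_mul
  intro x y
  have h := molA_est ρ γ L hρ_nonneg hρ_supp hρ_int hρc hγ_lip ε ε x y
  simpa [Real.dist_eq, dist_eq_norm] using h

set_option maxHeartbeats 1000000 in
theorem stmt17 (ρ γ : E2 → ℝ) (L : ℝ≥0)
    (hρ_smooth : ContDiff ℝ (⊤ : ℕ∞) ρ) (hρ_nonneg : ∀ x, 0 ≤ ρ x)
    (hρ_supp : Function.support ρ ⊆ Metric.closedBall 0 1)
    (hρ_int : ∫ x : E2, ρ x = 1)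
    (hγ_nonneg : ∀ x, 0 ≤ γ x) (hγ_conv : ConvexOn ℝ Set.univ γ)
    (hγ_lip : LipschitzWith L γ)
    (Ω : Set E2) (hΩ : MeasurableSet Ω) (hΩfin : volume Ω ≠ ⊤)
    (ε₀ : ℝ) (hε₀ : 0 ≤ ε₀)
    (εs : ℕ → ℝ) (hεs : ∀ n, 0 < εs n) (hεs_lim : Tendsto εs atTop (𝓝 ε₀)) :
    (∀ w : E2 → E2, MemLp w 2 (volume.restrict Ω) →
      Tendsto (fun n => ∫ x in Ω, gam ρ γ (εs n) (w x)) atTop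
        (𝓝 (∫ x in Ω, gam ρ γ ε₀ (w x)))) ∧
    ∀ (ws : ℕ → E2 → E2) (w : E2 → E2),
      (∀ n, MemLp (ws n) 2 (volume.restrict Ω)) →
      MemLp w 2 (volume.restrict Ω) →
      (∀ φ : E2 → E2, MemLp φ 2 (volume.restrict Ω) →
        Tendsto (fun n => ∫ x in Ω, ⟪ws n x, φ x⟫) atTop
          (𝓝 (∫ x in Ω, ⟪w x, φ x⟫))) →
      (∫ x in Ω, gam ρ γ ε₀ (w x))
        ≤ atTop.liminf fun n => ∫ x in Ω, gam ρ γ (εs n) (ws n x) := by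
  have hρc := hρ_smooth.continuous
  have hγc := hγ_lip.continuous
  set μ := volume.restrict Ω with hμ
  haveI : IsFiniteMeasure μ := ⟨by rw [hμ, Measure.restrict_apply_univ]; exact hΩfin.lt_top⟩
  set m : ℝ := (volume Ω).toReal with hm
  have hμuniv : μ Set.univ = volume Ω := by rw [hμ, Measure.restrict_apply_univ]
  have hgam : ∀ ε : ℝ, 0 ≤ ε → ∀ x, gam ρ γ ε x = molA ρ γ ε x :=
    fun ε hε x => gam_eq_molA ρ γ hρc hρ_supp hρ_int hγc ε hε x
  have hest := molA_est ρ γ L hρ_nonneg hρ_supp hρ_int hρc hγ_lip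
  have hnn := molA_nonneg ρ γ hρ_nonneg hγ_nonneg
  have hlip := molA_lip ρ γ L hρ_nonneg hρ_supp hρ_int hρc hγ_lip
  -- pointwise variation in ε
  have hvar : ∀ (ε δ : ℝ) (y : E2), |molA ρ γ ε y - molA ρ γ δ y| ≤ (L : ℝ) * |ε - δ| := by
    intro ε δ y
    have h := hest ε δ y y
    simpa using h
  -- pointwise linear bound
  have hlin : ∀ (ε : ℝ) (y : E2), molA ρ γ ε y ≤ molA ρ γ ε 0 + (L : ℝ) * ‖y‖ := by
    intro ε y
    have h := hest ε ε y 0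
    simp only [sub_self, abs_zero, add_zero, sub_zero] at h
    linarith [(abs_le.mp h).2]
  -- integrability of compositions
  have hcomp : ∀ (ε : ℝ) (u : E2 → E2), MemLp u 2 μ →
      Integrable (fun x => molA ρ γ ε (u x)) μ := by
    intro ε u hu
    have hu1 : Integrable u μ := (hu.mono_exponent (by norm_num)).integrable le_rfl
    have hmeas : AEStronglyMeasurable (fun x => molA ρ γ ε (u x)) μ :=
      (hlip ε).continuous.comp_aestronglyMeasurable hu.aestronglyMeasurable
    apply Integrable.mono'
      ((integrable_const (molA ρ γ ε 0)).add (hu1.norm.const_mul (L : ℝ))) hmeas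
    filter_upwards with x
    rw [Real.norm_eq_abs, abs_of_nonneg (hnn ε (u x))]
    exact hlin ε (u x)
  -- the vanishing error sequence
  have hc0 : Tendsto (fun n => (L : ℝ) * |εs n - ε₀| * m) atTop (𝓝 0) := by
    have h1 : Tendsto (fun n => |εs n - ε₀|) atTop (𝓝 0) := by
      have := (hεs_lim.sub_const ε₀).abs
      simpa using this
    have := (h1.const_mul (L : ℝ)).mul_const m
    simpa using this
  -- difference of integrals bound
  have hdiff : ∀ (ε δ : ℝ) (u : E2 → E2), MemLp u 2 μ →
      |(∫ x, molA ρ γ ε (u x) ∂μ) - ∫ x, molA ρ γ δ (u x) ∂μ| ≤ (L : ℝ) * |ε - δ| * m := by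
    intro ε δ u hu
    rw [← integral_sub (hcomp ε u hu) (hcomp δ u hu)]
    calc |∫ x, (molA ρ γ ε (u x) - molA ρ γ δ (u x)) ∂μ|
        ≤ ∫ x, |molA ρ γ ε (u x) - molA ρ γ δ (u x)| ∂μ := by
          simpa [Real.norm_eq_abs] using
            norm_integral_le_integral_norm (μ := μ)
              (fun x => molA ρ γ ε (u x) - molA ρ γ δ (u x))
      _ ≤ ∫ _x, (L : ℝ) * |ε - δ| ∂μ :=
          integral_mono ((hcomp ε u hu).sub (hcomp δ u hu)).abs (integrable_const _)
            (fun x => hvar ε δ (u x))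
      _ = (L : ℝ) * |ε - δ| * m := by
          rw [integral_const, measureReal_def, hμuniv, smul_eq_mul, mul_comm]
  constructor
  · -- (M1)
    intro w hw
    have heq : ∀ n, (∫ x in Ω, gam ρ γ (εs n) (w x)) = ∫ x, molA ρ γ (εs n) (w x) ∂μ := by
      intro n
      rw [hμ]
      exact integral_congr_ae (Filter.Eventually.of_forall fun x => hgam (εs n) (hεs n).le (w x))
    have heq0 : (∫ x in Ω, gam ρ γ ε₀ (w x)) = ∫ x, molA ρ γ ε₀ (w x) ∂μ := by
      rw [hμ]
      exact integral_congr_ae (Filter.Eventually.of_forall fun x => hgam ε₀ hε₀ (w x))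
    simp only [hμ, heq, heq0]
    rw [tendsto_iff_dist_tendsto_zero]
    have hb : ∀ n, dist (∫ x, molA ρ γ (εs n) (w x) ∂μ) (∫ x, molA ρ γ ε₀ (w x) ∂μ)
        ≤ (L : ℝ) * |εs n - ε₀| * m := fun n => by
      rw [Real.dist_eq]; exact hdiff (εs n) ε₀ w hw
    exact squeeze_zero (fun n => dist_nonneg) hb hc0
  · -- (M2)
    intro ws w hws hw hweak
    have hΦeq : ∀ n, (∫ x in Ω, gam ρ γ (εs n) (ws n x)) = ∫ x, molA ρ γ (εs n) (ws n x) ∂μ := by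
      intro n; rw [hμ]
      exact integral_congr_ae (Filter.Eventually.of_forall fun x => hgam (εs n) (hεs n).le _)
    have hgoal : (∫ x in Ω, gam ρ γ ε₀ (w x)) = ∫ x, molA ρ γ ε₀ (w x) ∂μ := by
      rw [hμ]; exact integral_congr_ae (Filter.Eventually.of_forall fun x => hgam ε₀ hε₀ _)
    have hΦrw : (atTop.liminf fun n => ∫ x in Ω, gam ρ γ (εs n) (ws n x))
        = atTop.liminf fun n => ∫ x, molA ρ γ (εs n) (ws n x) ∂μ := by
      congr 1; funext n; exact hΦeq n
    rw [hgoal, hΦrw]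
    set Φ : ℕ → ℝ := fun n => ∫ x, molA ρ γ (εs n) (ws n x) ∂μ with hΦ
    have hwsint : ∀ n, Integrable (ws n) μ := fun n =>
      ((hws n).mono_exponent (by norm_num)).integrable le_rfl
    have hw1 : Integrable w μ := (hw.mono_exponent (by norm_num)).integrable le_rfl
    -- uniform bound on ∫ ‖ws n‖ via Banach-Steinhaus
    obtain ⟨Cb, hCb⟩ : ∃ C, ∀ n, (∫ x, ‖ws n x‖ ∂μ) ≤ C := by
      haveI : Fact ((1:ENNReal) ≤ 2) := ⟨by norm_num⟩
      set W : ℕ → Lp E2 2 μ := fun n => ((hws n).toLp (ws n)) with hW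
      set T : ℕ → (Lp E2 2 μ) →L[ℝ] ℝ := fun n => innerSL ℝ (W n) with hT
      have hTapp : ∀ (n : ℕ) (φ : Lp E2 2 μ), T n φ = ∫ x, ⟪ws n x, φ x⟫ ∂μ := by
        intro n φ
        rw [hT]
        simp only [innerSL_apply_apply]
        rw [MeasureTheory.L2.inner_def]
        apply integral_congr_ae
        filter_upwards [(hws n).coeFn_toLp] with x hx
        rw [hW]
        simp only []
        rw [hx]
      have hpt : ∀ φ : Lp E2 2 μ, ∃ C, ∀ n, ‖T n φ‖ ≤ C := by
        intro φ
        have hconv := hweak φ (Lp.memLp φ)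
        have hconv' : Tendsto (fun n => ‖T n φ‖) atTop (𝓝 ‖∫ x, ⟪w x, φ x⟫ ∂μ‖) := by
          simp only [hTapp]
          exact hconv.norm
        obtain ⟨C, hC⟩ := hconv'.bddAbove_range
        exact ⟨C, fun n => hC ⟨n, rfl⟩⟩
      obtain ⟨C', hC'⟩ := banach_steinhaus hpt
      have hC'0 : 0 ≤ C' := le_trans (norm_nonneg _) (hC' 0)
      have hWle : ∀ n, ‖W n‖ ≤ C' := by
        intro n
        have h1 : T n (W n) = ‖W n‖ ^ 2 := by
          rw [hT]; simp only [innerSL_apply_apply]; exact real_inner_self_eq_norm_sq _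
        have h2 : ‖T n (W n)‖ ≤ ‖T n‖ * ‖W n‖ := (T n).le_opNorm _
        rw [h1, Real.norm_eq_abs, abs_of_nonneg (by positivity)] at h2
        by_cases h0 : ‖W n‖ = 0
        · rw [h0]; exact hC'0
        · have hpos : 0 < ‖W n‖ := lt_of_le_of_ne (norm_nonneg _) (Ne.symm h0)
          nlinarith [hC' n, norm_nonneg (W n)]
      set K : ENNReal := (μ Set.univ) ^ (2:ℝ)⁻¹ with hK
      have hKtop : K ≠ ⊤ := by
        rw [hK]
        exact ENNReal.rpow_ne_top_of_nonneg (by norm_num) (measure_ne_top μ _)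
      refine ⟨C' * K.toReal, fun n => ?_⟩
      have h3 : eLpNorm (ws n) 1 μ ≤ eLpNorm (ws n) 2 μ * K := by
        have := eLpNorm_le_eLpNorm_mul_rpow_measure_univ (μ := μ)
          (by norm_num : (1:ENNReal) ≤ 2) (hws n).1
        convert this using 2
        rw [hK]
        norm_num
      have h4 : (∫ x, ‖ws n x‖ ∂μ) = (eLpNorm (ws n) 1 μ).toReal := by
        rw [integral_norm_eq_lintegral_enorm (hws n).1, eLpNorm_one_eq_lintegral_enorm]
      rw [h4]
      calc (eLpNorm (ws n) 1 μ).toReal ≤ (eLpNorm (ws n) 2 μ * K).toReal :=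
            ENNReal.toReal_mono (ENNReal.mul_ne_top (hws n).2.ne hKtop) h3
        _ = (eLpNorm (ws n) 2 μ).toReal * K.toReal := ENNReal.toReal_mul
        _ = ‖W n‖ * K.toReal := by rw [hW]; rw [MeasureTheory.Lp.norm_toLp]
        _ ≤ C' * K.toReal := by
            apply mul_le_mul_of_nonneg_right (hWle n) ENNReal.toReal_nonneg
    -- Φ is bounded above
    obtain ⟨B, hB⟩ : ∃ B, ∀ n, |εs n - ε₀| ≤ B := by
      have h1 : Tendsto (fun n => |εs n - ε₀|) atTop (𝓝 0) := by
        simpa using (hεs_lim.sub_const ε₀).abs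
      obtain ⟨B, hB⟩ := h1.bddAbove_range
      exact ⟨B, fun n => hB ⟨n, rfl⟩⟩
    have hΦbdd : IsBoundedUnder (· ≤ ·) atTop Φ := by
      refine isBoundedUnder_of ⟨(molA ρ γ ε₀ 0 + (L:ℝ) * B) * m + (L:ℝ) * Cb, fun n => ?_⟩
      have hpt : ∀ x : E2, molA ρ γ (εs n) (ws n x)
          ≤ (molA ρ γ ε₀ 0 + (L:ℝ) * B) + (L:ℝ) * ‖ws n x‖ := by
        intro x
        have h1 := hlin (εs n) (ws n x)
        have h2 := (abs_le.mp (hvar (εs n) ε₀ 0)).2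
        have hLB : (L:ℝ) * |εs n - ε₀| ≤ (L:ℝ) * B :=
          mul_le_mul_of_nonneg_left (hB n) L.coe_nonneg
        linarith
      have hIb : Integrable (fun x => ((molA ρ γ ε₀ 0 + (L:ℝ) * B) + (L:ℝ) * ‖ws n x‖)) μ :=
        (integrable_const _).add ((hwsint n).norm.const_mul _)
      calc Φ n ≤ ∫ x, ((molA ρ γ ε₀ 0 + (L:ℝ) * B) + (L:ℝ) * ‖ws n x‖) ∂μ :=
            integral_mono (hcomp _ _ (hws n)) hIb hpt
        _ = (molA ρ γ ε₀ 0 + (L:ℝ) * B) * m + (L:ℝ) * (∫ x, ‖ws n x‖ ∂μ) := by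
            rw [integral_add (integrable_const _) ((hwsint n).norm.const_mul _),
              integral_const, measureReal_def, hμuniv, smul_eq_mul, mul_comm, integral_const_mul]
        _ ≤ (molA ρ γ ε₀ 0 + (L:ℝ) * B) * m + (L:ℝ) * Cb := by
            have := mul_le_mul_of_nonneg_left (hCb n) L.coe_nonneg
            linarith
    -- subgradients
    choose sg hsg using fun a => exists_subgradient (molA ρ γ ε₀)
      (molA_convex ρ γ hρc hρ_nonneg hρ_supp hγ_conv hγc ε₀) (hlip ε₀).continuous a
    have hsgn : ∀ a, ‖sg a‖ ≤ (L:ℝ) := fun a =>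
      subgrad_norm_le _ L (hlip ε₀) a (sg a) (hsg a)
    apply le_of_forall_pos_le_add
    intro η hη
    set δ : ℝ := η / (2 * (L:ℝ) + 1) with hδ
    have hδpos : 0 < δ := by positivity
    obtain ⟨v, hvclose, hv1⟩ :=
      (hw.mono_exponent (by norm_num : (1:ENNReal) ≤ 2)).exists_simpleFunc_eLpNorm_sub_lt
        ENNReal.one_ne_top (ENNReal.ofReal_pos.mpr hδpos).ne'
    obtain ⟨Cv, hCv⟩ := v.exists_forall_norm_le
    have hv2 : MemLp (⇑v) 2 μ :=
      MemLp.of_bound v.aestronglyMeasurable Cv (Filter.Eventually.of_forall hCv)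
    have hvint : Integrable (⇑v) μ := hv1.integrable le_rfl
    have hclose : (∫ x, ‖w x - v x‖ ∂μ) ≤ δ := by
      have h1 : (∫ x, ‖w x - v x‖ ∂μ) = (eLpNorm (w - ⇑v) 1 μ).toReal := by
        rw [show (fun x => ‖w x - v x‖) = fun x => ‖(w - ⇑v) x‖ from rfl,
          integral_norm_eq_lintegral_enorm (hw.1.sub hv2.1), eLpNorm_one_eq_lintegral_enorm]
      rw [h1]
      exact (ENNReal.toReal_lt_of_lt_ofReal hvclose).le
    set p : E2 → E2 := fun x => sg (v x) with hp
    have hpmeas : AEStronglyMeasurable p μ := by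
      have hcoe : p = ⇑(v.map sg) := by
        funext x; rw [hp]; simp [MeasureTheory.SimpleFunc.coe_map, Function.comp]
      rw [hcoe]; exact (v.map sg).aestronglyMeasurable
    have hpbd : ∀ x, ‖p x‖ ≤ (L:ℝ) := fun x => hsgn _
    have hp2 : MemLp p 2 μ :=
      MemLp.of_bound hpmeas (L:ℝ) (Filter.Eventually.of_forall hpbd)
    have hweakp := hweak p hp2
    have hinner : ∀ (u : E2 → E2), Integrable u μ → AEStronglyMeasurable u μ →
        Integrable (fun x => ⟪u x, p x⟫) μ := by
      intro u hu hum
      apply Integrable.mono' (hu.norm.const_mul (L:ℝ)) (hum.inner hpmeas)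
      filter_upwards with x
      rw [Real.norm_eq_abs]
      calc |⟪u x, p x⟫| ≤ ‖u x‖ * ‖p x‖ := abs_real_inner_le_norm _ _
        _ ≤ ‖u x‖ * (L:ℝ) := mul_le_mul_of_nonneg_left (hpbd x) (norm_nonneg _)
        _ = (L:ℝ) * ‖u x‖ := mul_comm _ _
    have hγtv_int : Integrable (fun x => molA ρ γ ε₀ (v x)) μ := hcomp ε₀ _ hv2
    have hwvnorm : Integrable (fun x => ‖w x - v x‖) μ := (hw1.sub hvint).norm
    set a : ℕ → ℝ := fun n => (∫ x, molA ρ γ ε₀ (v x) ∂μ)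
      + ((∫ x, ⟪ws n x, p x⟫ ∂μ) - ∫ x, ⟪v x, p x⟫ ∂μ) - (L:ℝ) * |εs n - ε₀| * m with ha
    have ha_le : ∀ n, a n ≤ Φ n := by
      intro n
      have hint1 : Integrable (fun x => ⟪ws n x, p x⟫) μ := hinner _ (hwsint n) (hws n).1
      have hint2 : Integrable (fun x => ⟪v x, p x⟫) μ := hinner _ hvint hv2.1
      have hint12 : Integrable (fun x => ⟪ws n x, p x⟫ - ⟪v x, p x⟫) μ := hint1.sub hint2
      have step1 : (∫ x, molA ρ γ ε₀ (v x) ∂μ)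
          + ((∫ x, ⟪ws n x, p x⟫ ∂μ) - ∫ x, ⟪v x, p x⟫ ∂μ)
          ≤ ∫ x, molA ρ γ ε₀ (ws n x) ∂μ := by
        rw [← integral_sub hint1 hint2, ← integral_add hγtv_int hint12]
        apply integral_mono (hγtv_int.add hint12) (hcomp ε₀ _ (hws n))
        intro x
        simp only [Pi.add_apply]
        have h := hsg (v x) (ws n x)
        have hx : ⟪ws n x, p x⟫ - ⟪v x, p x⟫ = ⟪sg (v x), ws n x - v x⟫ := by
          have h2 := inner_sub_left (𝕜 := ℝ) (ws n x) (v x) (p x)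
          rw [← h2, real_inner_comm]
        rw [hx]
        exact h
      have step2 : (∫ x, molA ρ γ ε₀ (ws n x) ∂μ) - (L:ℝ) * |εs n - ε₀| * m ≤ Φ n := by
        have hd := (abs_le.mp (hdiff ε₀ (εs n) (ws n) (hws n))).2
        rw [abs_sub_comm ε₀ (εs n)] at hd
        rw [hΦ]
        linarith
      calc a n ≤ (∫ x, molA ρ γ ε₀ (ws n x) ∂μ) - (L:ℝ) * |εs n - ε₀| * m := by
            rw [ha]; simp only []; linarith
        _ ≤ Φ n := step2
    set A : ℝ := (∫ x, molA ρ γ ε₀ (v x) ∂μ)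
      + ((∫ x, ⟪w x, p x⟫ ∂μ) - ∫ x, ⟪v x, p x⟫ ∂μ) with hA
    have ha_lim : Tendsto a atTop (𝓝 A) := by
      have h1 : Tendsto (fun n => (∫ x, molA ρ γ ε₀ (v x) ∂μ)
          + ((∫ x, ⟪ws n x, p x⟫ ∂μ) - ∫ x, ⟪v x, p x⟫ ∂μ)) atTop
          (𝓝 ((∫ x, molA ρ γ ε₀ (v x) ∂μ)
            + ((∫ x, ⟪w x, p x⟫ ∂μ) - ∫ x, ⟪v x, p x⟫ ∂μ))) :=
        tendsto_const_nhds.add ((hweakp).sub_const _)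
      have h2 := h1.sub hc0
      rw [ha, hA]
      simpa using h2
    have h1 : A ≤ atTop.liminf Φ := by
      rw [← ha_lim.liminf_eq]
      exact liminf_le_liminf (Filter.Eventually.of_forall ha_le)
        (ha_lim.isBoundedUnder_ge) (hΦbdd.isCoboundedUnder_ge)
    have h2 : (∫ x, molA ρ γ ε₀ (w x) ∂μ) ≤ (∫ x, molA ρ γ ε₀ (v x) ∂μ) + (L:ℝ) * δ := by
      have hpt : ∀ x, molA ρ γ ε₀ (w x) ≤ molA ρ γ ε₀ (v x) + (L:ℝ) * ‖w x - v x‖ := by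
        intro x
        have h := (abs_le.mp (hest ε₀ ε₀ (w x) (v x))).2
        simp only [sub_self, abs_zero, add_zero] at h
        linarith
      have hIb : Integrable (fun x => molA ρ γ ε₀ (v x) + (L:ℝ) * ‖w x - v x‖) μ :=
        hγtv_int.add (hwvnorm.const_mul _)
      calc (∫ x, molA ρ γ ε₀ (w x) ∂μ)
          ≤ ∫ x, (molA ρ γ ε₀ (v x) + (L:ℝ) * ‖w x - v x‖) ∂μ :=
            integral_mono (hcomp ε₀ w hw) hIb hpt
        _ = (∫ x, molA ρ γ ε₀ (v x) ∂μ) + (L:ℝ) * ∫ x, ‖w x - v x‖ ∂μ := by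
            rw [integral_add hγtv_int (hwvnorm.const_mul _), integral_const_mul]
        _ ≤ _ := by
            have := mul_le_mul_of_nonneg_left hclose L.coe_nonneg
            linarith
    have h3 : |(∫ x, ⟪w x, p x⟫ ∂μ) - ∫ x, ⟪v x, p x⟫ ∂μ| ≤ (L:ℝ) * δ := by
      have hint1 : Integrable (fun x => ⟪w x, p x⟫) μ := hinner _ hw1 hw.1
      have hint2 : Integrable (fun x => ⟪v x, p x⟫) μ := hinner _ hvint hv2.1
      have hint12 : Integrable (fun x => ⟪w x, p x⟫ - ⟪v x, p x⟫) μ := hint1.sub hint2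
      rw [← integral_sub hint1 hint2]
      calc |∫ x, (⟪w x, p x⟫ - ⟪v x, p x⟫) ∂μ|
          ≤ ∫ x, |⟪w x, p x⟫ - ⟪v x, p x⟫| ∂μ := by
            simpa [Real.norm_eq_abs] using
              norm_integral_le_integral_norm (μ := μ) (fun x => ⟪w x, p x⟫ - ⟪v x, p x⟫)
        _ ≤ ∫ x, (L:ℝ) * ‖w x - v x‖ ∂μ := by
            apply integral_mono hint12.abs (hwvnorm.const_mul _)
            intro x
            dsimp only
            rw [← inner_sub_left]
            calc |⟪w x - v x, p x⟫| ≤ ‖w x - v x‖ * ‖p x‖ := abs_real_inner_le_norm _ _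
              _ ≤ ‖w x - v x‖ * (L:ℝ) := mul_le_mul_of_nonneg_left (hpbd x) (norm_nonneg _)
              _ = (L:ℝ) * ‖w x - v x‖ := mul_comm _ _
        _ = (L:ℝ) * ∫ x, ‖w x - v x‖ ∂μ := integral_const_mul _ _
        _ ≤ (L:ℝ) * δ := mul_le_mul_of_nonneg_left hclose L.coe_nonneg
    have hfin : (∫ x, molA ρ γ ε₀ (w x) ∂μ) ≤ A + 2 * (L:ℝ) * δ := by
      rw [hA]
      have := (abs_le.mp h3).1
      linarith
    have hδb : 2 * (L:ℝ) * δ ≤ η := by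
      have h2L : (0:ℝ) < 2 * (L:ℝ) + 1 := by positivity
      calc 2 * (L:ℝ) * δ ≤ (2 * (L:ℝ) + 1) * δ := by nlinarith [hδpos.le]
        _ = η := by rw [hδ]; field_simp
    linarith
end
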